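/- Let T = {s_1,…,s_M} ⊆ S_k have nonempty essential set, and suppose there exists j ∉ Fix(T) such that Orb_T(j) ∩ Q_i ≠ ∅ for every i ∈ {1,…,M}. Then the subgroup of Aut(X_k^*) generated by T is infinite. -/

import Mathlib

/-!
Common framework: automorphisms of the rooted tree `X_k^*`, root permutations,
sections, self-similar and contracting groups, Hanoi automorphisms and Hanoi
groups, following Makisumi–Stadnyk–Steinhurst, "Modified Hanoi Towers Groups
and Limit Spaces".

A word `x_n … x_1` over the alphabet `X_k = Fin k` is encoded as the list
`[x_n, …, x_1]`, whose head `x_n` is the first letter, i.e. the letter that a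
tree automorphism reads (and permutes) first.
-/

namespace Hanoi

/-- Words over the alphabet `X_k = Fin k`. -/
abbrev Word (k : ℕ) := List (Fin k)

/-- `e` is an automorphism of the rooted tree `X_k^*`: it fixes the root
(the empty word), preserves word length (levels) and preserves the tree
structure (words sharing an initial segment of length `n` are sent to words
sharing an initial segment of length `n`). -/
def IsTreeAut {k : ℕ} (e : Equiv.Perm (Word k)) : Prop :=
  (∀ w : Word k, (e w).length = w.length) ∧
    ∀ (w v : Word k) (n : ℕ), w.take n = v.take n → (e w).take n = (e v).take n

open Classical in
/-- The root permutation `σ_e` of a tree automorphism `e` (its action on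
one-letter words). -/
noncomputable def rootPerm {k : ℕ} (e : Equiv.Perm (Word k)) : Equiv.Perm (Fin k) :=
  if h : Function.Bijective (fun x : Fin k => ((e [x]).head?.getD x)) then
    Equiv.ofBijective _ h
  else 1

open Classical in
/-- The section `e|_x` of `e` at a letter `x`: the unique automorphism with
`e (x :: w) = σ_e x :: (e|_x) w` for all words `w`. -/
noncomputable def sec {k : ℕ} (e : Equiv.Perm (Word k)) (x : Fin k) : Equiv.Perm (Word k) :=
  if h : Function.Bijective (fun w : Word k => (e (x :: w)).tail) then
    Equiv.ofBijective _ h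
  else 1

/-- The section `e|_v` of `e` at a word `v = x_n … x_1`, defined by
`e|_v = (e|_{x_n})|_{x_{n-1} … x_1}`. -/
noncomputable def secW {k : ℕ} (e : Equiv.Perm (Word k)) : Word k → Equiv.Perm (Word k)
  | [] => e
  | x :: v => secW (sec e x) v

/-- A subgroup of the permutations of `X_k^*` is self-similar if it consists of
tree automorphisms and is closed under taking sections. -/
def IsSelfSimilar {k : ℕ} (G : Subgroup (Equiv.Perm (Word k))) : Prop :=
  (∀ g ∈ G, IsTreeAut g) ∧ ∀ g ∈ G, ∀ x : Fin k, sec g x ∈ G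

/-- A self-similar group `G` is contracting if there is a finite subset `N ⊆ G`
such that for every `g ∈ G` all sections of `g` at words of length at least
some `m` lie in `N`. -/
def IsContracting {k : ℕ} (G : Subgroup (Equiv.Perm (Word k))) : Prop :=
  ∃ N : Set (Equiv.Perm (Word k)), N.Finite ∧ N ⊆ (G : Set (Equiv.Perm (Word k))) ∧
    ∀ g ∈ G, ∃ m : ℕ, ∀ v : Word k, m ≤ v.length → secW g v ∈ N

/-- `N` is the nucleus of `G`: a smallest finite subset of `G` catching all
deep enough sections of every element of `G`. -/
def IsNucleus {k : ℕ} (G : Subgroup (Equiv.Perm (Word k)))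
    (N : Set (Equiv.Perm (Word k))) : Prop :=
  (N.Finite ∧ N ⊆ (G : Set (Equiv.Perm (Word k))) ∧
    ∀ g ∈ G, ∃ m : ℕ, ∀ v : Word k, m ≤ v.length → secW g v ∈ N) ∧
  ∀ N' : Set (Equiv.Perm (Word k)), N'.Finite → N' ⊆ (G : Set (Equiv.Perm (Word k))) →
    (∀ g ∈ G, ∃ m : ℕ, ∀ v : Word k, m ≤ v.length → secW g v ∈ N') → N ⊆ N'

/-- `a` is a Hanoi automorphism with set of inactive pegs `Q`: the section at
each active peg (element of the complement of `Q`) is trivial, the section at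
each inactive peg is `a` itself, and the root permutation fixes each inactive
peg. -/
def IsHanoiWith {k : ℕ} (a : Equiv.Perm (Word k)) (Q : Set (Fin k)) : Prop :=
  IsTreeAut a ∧ (∀ i ∉ Q, sec a i = 1) ∧ (∀ j ∈ Q, sec a j = a) ∧
    ∀ j ∈ Q, rootPerm a j = j

/-- `a` is a `k`-peg Hanoi automorphism. -/
def IsHanoiAut {k : ℕ} (a : Equiv.Perm (Word k)) : Prop := ∃ Q, IsHanoiWith a Q

open Classical in
/-- The set `Q_a` of inactive pegs of a Hanoi automorphism `a`; by convention
`Q_1 = X_k` (for `a ≠ 1` the set of inactive pegs is uniquely determined). -/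
noncomputable def inactivePegs {k : ℕ} (a : Equiv.Perm (Word k)) : Set (Fin k) :=
  if a = 1 then Set.univ
  else if h : ∃ Q, IsHanoiWith a Q then h.choose else ∅

/-- `S_{k,q}`: the set of Hanoi automorphisms over `X_k` with exactly `q`
inactive pegs. -/
noncomputable def hanoiSet (k q : ℕ) : Set (Equiv.Perm (Word k)) :=
  {a | IsHanoiAut a ∧ (inactivePegs a).ncard = q}

/-- `L = [s_n, …, s_1]` is a representation of `g` over the generating set `S`:
each `s_i ∈ S ∪ S⁻¹` and `g = s_n ⋯ s_2 s_1`. -/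
def IsRepOf {k : ℕ} (S : Set (Equiv.Perm (Word k))) (L : List (Equiv.Perm (Word k)))
    (g : Equiv.Perm (Word k)) : Prop :=
  (∀ s ∈ L, s ∈ S ∨ s⁻¹ ∈ S) ∧ L.prod = g

/-- The length `l(g)` of `g` with respect to `S`: the length of a minimal
representation (`0` for the identity). -/
noncomputable def repLength {k : ℕ} (S : Set (Equiv.Perm (Word k)))
    (g : Equiv.Perm (Word k)) : ℕ :=
  sInf {n | ∃ L, IsRepOf S L g ∧ L.length = n}

/-- The essential set of a representation: the intersection of the sets of
inactive pegs of its letters. -/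
noncomputable def essSet {k : ℕ} (L : List (Equiv.Perm (Word k))) : Set (Fin k) :=
  ⋂ s ∈ L, inactivePegs s

/-- The prenucleus of `G`: the set of elements `g ∈ G` with `g|_j = g` for some
letter `j`. -/
noncomputable def preNucleus {k : ℕ} (G : Subgroup (Equiv.Perm (Word k))) :
    Set (Equiv.Perm (Word k)) :=
  {g | g ∈ G ∧ ∃ j : Fin k, sec g j = g}

/-- The underlying function of the Hanoi Towers move `a_{ij}`: it changes the
first occurrence of `i` or `j` in a word by means of the transposition `(i j)`
and leaves the rest of the word unchanged. -/
def hanoiMoveFun {k : ℕ} (i j : Fin k) : Word k → Word k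
  | [] => []
  | x :: w => if x = i ∨ x = j then Equiv.swap i j x :: w else x :: hanoiMoveFun i j w

theorem hanoiMoveFun_involutive {k : ℕ} (i j : Fin k) :
    Function.Involutive (hanoiMoveFun i j) := by
  intro w
  induction w with
  | nil => rfl
  | cons x t ih =>
    by_cases h : x = i ∨ x = j
    · have h2 : Equiv.swap i j x = i ∨ Equiv.swap i j x = j := by
        rcases h with h | h <;> subst h <;> simp
      simp only [hanoiMoveFun, if_pos h, if_pos h2, Equiv.swap_apply_self]
    · simp only [hanoiMoveFun, if_neg h, ih]

/-- The Hanoi Towers move `a_{ij}`, as a permutation of `X_k^*`: its root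
permutation is the transposition `(i j)`, its sections at `i` and `j` are
trivial and all its other sections equal `a_{ij}` itself. -/
def hanoiMove {k : ℕ} (i j : Fin k) : Equiv.Perm (Word k) :=
  (hanoiMoveFun_involutive i j).toPerm

/-- The orbit of the letter `j` under the subgroup of `Sym(X_k)` generated by
the root permutations of the elements of `T`. -/
noncomputable def orbT {k : ℕ} (T : Finset (Equiv.Perm (Word k))) (j : Fin k) : Set (Fin k) :=
  MulAction.orbit (Subgroup.closure ((fun a => rootPerm a) '' (T : Set (Equiv.Perm (Word k))))) j

/-- The set `Fix(T)` of letters fixed by the root permutation of every element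
of `T`. -/
noncomputable def fixT {k : ℕ} (T : Finset (Equiv.Perm (Word k))) : Set (Fin k) :=
  {x | ∀ s ∈ T, rootPerm s x = x}

/-- Condition (*) on a generating set `S` of Hanoi automorphisms: for every
finite `T ⊆ S` with nonempty essential set and every letter `j ∉ Fix(T)`,
the orbit of `j` misses the inactive pegs of some element of `T`. -/
noncomputable def CondStar {k : ℕ} (S : Set (Equiv.Perm (Word k))) : Prop :=
  ∀ T : Finset (Equiv.Perm (Word k)), (T : Set (Equiv.Perm (Word k))) ⊆ S →
    (⋂ s ∈ T, inactivePegs s).Nonempty →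
    ∀ j : Fin k, j ∉ fixT T →
      ∃ s ∈ T, orbT T j ∩ inactivePegs s = ∅

open Classical in
/-- `d(g)`: the least number of distinct generators occurring among all
representations of `g` having nonempty essential set. -/
noncomputable def dCount {k : ℕ} (S : Set (Equiv.Perm (Word k)))
    (g : Equiv.Perm (Word k)) : ℕ :=
  sInf {M | ∃ L, IsRepOf S L g ∧ (essSet L).Nonempty ∧ L.toFinset.card = M}

/-- `S` is fully symmetric: for every non-identity `a ∈ S` and every
`φ ∈ Sym(X_k)`, the Hanoi automorphism `φ·a` with inactive pegs `φ(Q_a)` and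
root permutation `φ ∘ σ_a ∘ φ⁻¹` again lies in `S`. -/
noncomputable def FullySymmetric {k : ℕ} (S : Set (Equiv.Perm (Word k))) : Prop :=
  ∀ a ∈ S, a ≠ 1 → ∀ φ : Equiv.Perm (Fin k), ∀ b : Equiv.Perm (Word k),
    IsHanoiWith b (φ '' inactivePegs a) →
    rootPerm b = φ * rootPerm a * φ⁻¹ → b ∈ S

/-- The family `R̲_{k,n}`: the identity together with all Hanoi automorphisms
`a` such that (1) `Q_a ⊆ {m+1, …, m+n}` for some `m`, and (2) whenever
`i ∈ Q_a` the root permutation of `a` fixes `i-1, …, i-(n-1)`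
(all peg labels mod `k`). -/
noncomputable def Runder (k n : ℕ) : Set (Equiv.Perm (Word k)) :=
  {a | a = 1 ∨ (IsHanoiAut a ∧
    (∃ m : Fin k, ∀ q ∈ inactivePegs a, ∃ t : ℕ, 1 ≤ t ∧ t ≤ n ∧
      (q : ℕ) = ((m : ℕ) + t) % k) ∧
    ∀ i ∈ inactivePegs a, ∀ x : Fin k, ∀ t : ℕ, 1 ≤ t → t ≤ n - 1 →
      ((x : ℕ) + t) % k = (i : ℕ) → rootPerm a x = x)}

/-- The family `R̄_{k,n}`: the identity together with all Hanoi automorphisms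
`a` such that (1) `Q_a ⊆ {m+1, …, m+n}` for some `m`, and (2) whenever
`i ∈ Q_a` the root permutation of `a` fixes `i+1, …, i+(n-1)`
(all peg labels mod `k`). -/
noncomputable def Rover (k n : ℕ) : Set (Equiv.Perm (Word k)) :=
  {a | a = 1 ∨ (IsHanoiAut a ∧
    (∃ m : Fin k, ∀ q ∈ inactivePegs a, ∃ t : ℕ, 1 ≤ t ∧ t ≤ n ∧
      (q : ℕ) = ((m : ℕ) + t) % k) ∧
    ∀ i ∈ inactivePegs a, ∀ x : Fin k, ∀ t : ℕ, 1 ≤ t → t ≤ n - 1 →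
      (x : ℕ) = ((i : ℕ) + t) % k → rootPerm a x = x)}

/-- The finite word `x_m … x_1` (first letter `x_m`) read off from a
left-infinite sequence `… x_2 x_1`, encoded as `x : ℕ → Fin k` with
`x s = x_{s+1}`. -/
def wordOf {k : ℕ} (x : ℕ → Fin k) (m : ℕ) : Word k := (List.range m).reverse.map x

/-!
Let `O` be the orbit of `j` under the root permutations of `T`. A generator acts on a word
`x :: u` either by `σ_s` on the first letter alone (`x` active) or as `x :: s u` (`x` inactive), so
the first letter can be moved freely within `O` without touching the tail, and any generator `s`
can be applied to the tail after parking the first letter on a peg of `O ∩ Q_s`. Hence all words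
of length `n` over `O` lie in a single orbit of `⟨T⟩`; as `O` contains `j ≠ σ_s j`, the group
`⟨T⟩` has at least `2 ^ n` elements for every `n`.
-/

section TreeAut

variable {k : ℕ} {e : Equiv.Perm (Word k)}

lemma IsTreeAut.exists_apply_singleton (h : IsTreeAut e) (x : Fin k) :
    ∃ y, e [x] = [y] :=
  List.length_eq_one_iff.mp (by simpa using h.1 [x])

lemma IsTreeAut.bijective_head_apply_singleton (h : IsTreeAut e) :
    Function.Bijective (fun x : Fin k => (e [x]).head?.getD x) := by
  refine Finite.injective_iff_bijective.mp fun x y hxy => ?_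
  obtain ⟨a, ha⟩ := h.exists_apply_singleton x
  obtain ⟨b, hb⟩ := h.exists_apply_singleton y
  simp only [ha, hb, List.head?_cons, Option.getD_some] at hxy
  exact List.singleton_injective (e.injective (ha.trans (hxy ▸ hb.symm)))

lemma IsTreeAut.apply_singleton (h : IsTreeAut e) (x : Fin k) :
    e [x] = [rootPerm e x] := by
  obtain ⟨a, ha⟩ := h.exists_apply_singleton x
  rw [rootPerm, dif_pos h.bijective_head_apply_singleton, Equiv.ofBijective_apply, ha]
  rfl

lemma IsTreeAut.apply_cons_eq_rootPerm_cons_tail (h : IsTreeAut e) (x : Fin k) (w : Word k) :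
    e (x :: w) = rootPerm e x :: (e (x :: w)).tail := by
  have hhead := h.2 (x :: w) [x] 1 (by simp)
  rw [h.apply_singleton x] at hhead
  cases hc : e (x :: w) with
  | nil => simpa [hc] using h.1 (x :: w)
  | cons a t => simp_all

lemma IsTreeAut.bijective_tail_apply_cons (h : IsTreeAut e) (x : Fin k) :
    Function.Bijective (fun w : Word k => (e (x :: w)).tail) := by
  refine ⟨fun w w' hw => ?_, fun v => ?_⟩
  · have : e (x :: w) = e (x :: w') := by
      rw [h.apply_cons_eq_rootPerm_cons_tail x w, h.apply_cons_eq_rootPerm_cons_tail x w']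
      exact congrArg _ hw
    simpa using e.injective this
  · have hlen : (e⁻¹ (rootPerm e x :: v)).length = v.length + 1 := by
      simpa using (h.1 (e⁻¹ (rootPerm e x :: v))).symm
    obtain ⟨y, w, hyw⟩ := List.exists_cons_of_length_eq_add_one hlen
    have he : e (y :: w) = rootPerm e x :: v := by
      rw [← hyw]
      exact e.apply_symm_apply _
    have hy := he
    rw [h.apply_cons_eq_rootPerm_cons_tail y w, List.cons.injEq] at hy
    obtain rfl := (rootPerm e).injective hy.1
    exact ⟨w, by simp [he]⟩

lemma IsTreeAut.apply_cons (h : IsTreeAut e) (x : Fin k) (w : Word k) :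
    e (x :: w) = rootPerm e x :: sec e x w := by
  rw [sec, dif_pos (h.bijective_tail_apply_cons x)]
  exact h.apply_cons_eq_rootPerm_cons_tail x w

lemma isTreeAut_one : IsTreeAut (1 : Equiv.Perm (Word k)) :=
  ⟨fun _ => rfl, fun _ _ _ hn => hn⟩

lemma rootPerm_one_apply (x : Fin k) : rootPerm (1 : Equiv.Perm (Word k)) x = x :=
  (List.cons.inj (isTreeAut_one.apply_cons x []).symm).1

lemma sec_one (x : Fin k) : sec (1 : Equiv.Perm (Word k)) x = 1 :=
  Equiv.ext fun w => (List.cons.inj (isTreeAut_one.apply_cons x w).symm).2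

end TreeAut

section HanoiAut

variable {k : ℕ} {a : Equiv.Perm (Word k)} {Q : Set (Fin k)} {x : Fin k}

lemma IsHanoiWith.apply_cons_of_mem (h : IsHanoiWith a Q) (hx : x ∈ Q) (w : Word k) :
    a (x :: w) = x :: a w := by
  rw [h.1.apply_cons, h.2.2.1 x hx, h.2.2.2 x hx]

lemma IsHanoiWith.apply_cons_of_notMem (h : IsHanoiWith a Q) (hx : x ∉ Q) (w : Word k) :
    a (x :: w) = rootPerm a x :: w := by
  rw [h.1.apply_cons, h.2.1 x hx]
  rfl

lemma IsHanoiAut.isHanoiWith_inactivePegs (h : IsHanoiAut a) :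
    IsHanoiWith a (inactivePegs a) := by
  rw [inactivePegs]
  split_ifs with h1
  · subst h1
    exact ⟨isTreeAut_one, fun i hi => absurd (Set.mem_univ i) hi, fun j _ => sec_one j,
      fun j _ => rootPerm_one_apply j⟩
  · exact h.choose_spec
  · exact absurd h ‹_›

end HanoiAut

def rootGroup {k : ℕ} (S : Set (Equiv.Perm (Word k))) : Subgroup (Equiv.Perm (Fin k)) :=
  Subgroup.closure (rootPerm '' S)

lemma orbT_eq_orbit_rootGroup {k : ℕ} (T : Finset (Equiv.Perm (Word k))) (j : Fin k) :
    orbT T j = MulAction.orbit (rootGroup (T : Set (Equiv.Perm (Word k)))) j :=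
  rfl

section Orbits

open MulAction

variable {k : ℕ} {S : Set (Equiv.Perm (Word k))}

lemma orbit_cons_eq_of_mem_rootGroup (hS : ∀ s ∈ S, IsHanoiAut s)
    {ρ : Equiv.Perm (Fin k)} (hρ : ρ ∈ rootGroup S) (x : Fin k) (u : Word k) :
    orbit (Subgroup.closure S) (ρ x :: u) = orbit (Subgroup.closure S) (x :: u) := by
  induction hρ using Subgroup.closure_induction generalizing x with
  | mem _ hρ =>
    obtain ⟨s, hs, rfl⟩ := hρ
    have hs' := (hS s hs).isHanoiWith_inactivePegs
    by_cases hx : x ∈ inactivePegs s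
    · rw [hs'.2.2.2 x hx]
    · rw [← hs'.apply_cons_of_notMem hx u]
      exact orbit_smul (⟨s, Subgroup.subset_closure hs⟩ : Subgroup.closure S) _
  | one => rfl
  | mul ρ₁ ρ₂ _ _ ih₁ ih₂ => exact (ih₁ (ρ₂ x)).trans (ih₂ x)
  | inv ρ _ ih => simpa using (ih (ρ⁻¹ x)).symm

lemma orbit_cons_eq_of_mem_orbit_rootGroup (hS : ∀ s ∈ S, IsHanoiAut s) {x y : Fin k}
    (hy : y ∈ orbit (rootGroup S) x) (u : Word k) :
    orbit (Subgroup.closure S) (y :: u) = orbit (Subgroup.closure S) (x :: u) := by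
  obtain ⟨⟨ρ, hρ⟩, rfl⟩ := hy
  exact orbit_cons_eq_of_mem_rootGroup hS hρ x u

lemma orbit_cons_apply_eq_of_mem_closure (hS : ∀ s ∈ S, IsHanoiAut s) {j : Fin k}
    (horb : ∀ s ∈ S, (orbit (rootGroup S) j ∩ inactivePegs s).Nonempty)
    {g : Equiv.Perm (Word k)} (hg : g ∈ Subgroup.closure S) (u : Word k) :
    orbit (Subgroup.closure S) (j :: g u) = orbit (Subgroup.closure S) (j :: u) := by
  induction hg using Subgroup.closure_induction generalizing u with
  | mem s hs =>
    obtain ⟨z, hzj, hzs⟩ := horb s hs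
    calc orbit (Subgroup.closure S) (j :: s u)
        = orbit (Subgroup.closure S) (z :: s u) :=
          (orbit_cons_eq_of_mem_orbit_rootGroup hS hzj _).symm
      _ = orbit (Subgroup.closure S) (s (z :: u)) := by
          rw [(hS s hs).isHanoiWith_inactivePegs.apply_cons_of_mem hzs]
      _ = orbit (Subgroup.closure S) (z :: u) :=
          orbit_smul (⟨s, Subgroup.subset_closure hs⟩ : Subgroup.closure S) _
      _ = orbit (Subgroup.closure S) (j :: u) := orbit_cons_eq_of_mem_orbit_rootGroup hS hzj u
  | one => rfl
  | mul g₁ g₂ _ _ ih₁ ih₂ => exact (ih₁ (g₂ u)).trans (ih₂ u)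
  | inv g _ ih => simpa using (ih (g⁻¹ u)).symm

lemma orbit_eq_orbit_replicate (hS : ∀ s ∈ S, IsHanoiAut s) {j : Fin k}
    (horb : ∀ s ∈ S, (orbit (rootGroup S) j ∩ inactivePegs s).Nonempty)
    {w : Word k} (hw : ∀ x ∈ w, x ∈ orbit (rootGroup S) j) :
    orbit (Subgroup.closure S) w = orbit (Subgroup.closure S) (List.replicate w.length j) := by
  induction w with
  | nil => rfl
  | cons y w ih =>
    obtain ⟨⟨g, hg⟩, hgw⟩ :=
      orbit_eq_iff.mp (ih fun x hx => hw x (List.mem_cons_of_mem y hx))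
    calc orbit (Subgroup.closure S) (y :: w)
        = orbit (Subgroup.closure S) (j :: w) :=
          orbit_cons_eq_of_mem_orbit_rootGroup hS (hw y List.mem_cons_self) w
      _ = orbit (Subgroup.closure S) (j :: g (List.replicate w.length j)) :=
          (congrArg (fun v => orbit (Subgroup.closure S) (j :: v)) hgw).symm
      _ = orbit (Subgroup.closure S) (j :: List.replicate w.length j) :=
          orbit_cons_apply_eq_of_mem_closure hS horb hg _
      _ = orbit (Subgroup.closure S) (List.replicate (y :: w).length j) := rfl

end Orbits

lemma infinite_of_two_letter_words_mem_orbit {G α : Type*} [Group G] [MulAction G (List α)]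
    {a c : α} (hac : a ≠ c)
    (h : ∀ w : List α, (∀ x ∈ w, x = a ∨ x = c) →
      w ∈ MulAction.orbit G (List.replicate w.length c)) :
    Infinite G := by
  by_contra hG
  have : Finite G := not_infinite_iff_finite.mp hG
  set n := Nat.card G
  let word : (Fin n → Bool) → List α := fun b => List.ofFn fun i => bif b i then a else c
  have hword : Function.Injective word := by
    intro b b' hbb'
    funext i
    have := congrFun (List.ofFn_injective hbb') i
    cases hb : b i <;> cases hb' : b' i <;> simp_all [hac.symm]
  have hmem : ∀ b, word b ∈ MulAction.orbit G (List.replicate n c) := fun b => by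
    have hletters : ∀ x ∈ word b, x = a ∨ x = c := fun x hx => by
      obtain ⟨i, rfl⟩ := List.mem_ofFn.mp hx
      cases b i <;> simp
    simpa [word] using h (word b) hletters
  choose g hg using hmem
  have hg_inj : Function.Injective g := fun b b' hbb' =>
    hword (by rw [← hg b, ← hg b', hbb'])
  have := Nat.card_le_card_of_injective g hg_inj
  simp only [Nat.card_eq_fintype_card, Fintype.card_fun, Fintype.card_bool,
    Fintype.card_fin] at this
  exact (Nat.lt_two_pow_self).not_ge this

theorem infinite_subgroup_of_condStar_failure_general {k : ℕ}
    (T : Finset (Equiv.Perm (Word k))) (hT : ∀ s ∈ T, IsHanoiAut s)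
    (j : Fin k) (hj : j ∉ fixT T)
    (horb : ∀ s ∈ T, (orbT T j ∩ inactivePegs s).Nonempty) :
    (Subgroup.closure (T : Set (Equiv.Perm (Word k))) :
      Set (Equiv.Perm (Word k))).Infinite := by
  simp only [orbT_eq_orbit_rootGroup] at horb
  obtain ⟨s, hs, hsj⟩ : ∃ s ∈ T, rootPerm s j ≠ j := by simpa [fixT] using hj
  have hsj_mem : rootPerm s j ∈ MulAction.orbit (rootGroup (T : Set (Equiv.Perm (Word k)))) j :=
    ⟨⟨rootPerm s, Subgroup.subset_closure ⟨s, hs, rfl⟩⟩, rfl⟩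
  have : Infinite (Subgroup.closure (T : Set (Equiv.Perm (Word k)))) := by
    refine infinite_of_two_letter_words_mem_orbit hsj fun w hw => ?_
    have hletters :
        ∀ x ∈ w, x ∈ MulAction.orbit (rootGroup (T : Set (Equiv.Perm (Word k)))) j := by
      intro x hx
      rcases hw x hx with rfl | rfl
      · exact hsj_mem
      · exact MulAction.mem_orbit_self x
    rw [← orbit_eq_orbit_replicate hT horb hletters]
    exact MulAction.mem_orbit_self w
  exact Set.infinite_coe_iff.mp this

/-- from the proof of Theorem `hanoicontraction2`: failure of
condition (*) yields an infinite subgroup.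
Let `T = {s_1, …, s_M} ⊆ S_k` have nonempty essential set and suppose some
`j ∉ Fix(T)` has `Orb_T(j) ∩ Q_i ≠ ∅` for every `i`.  Then the subgroup
generated by `T` is infinite. -/
theorem infinite_subgroup_of_condStar_failure {k : ℕ}
    (T : Finset (Equiv.Perm (Word k))) (hT : ∀ s ∈ T, IsHanoiAut s)
    (hQ : (⋂ s ∈ T, inactivePegs s).Nonempty)
    (j : Fin k) (hj : j ∉ fixT T)
    (horb : ∀ s ∈ T, (orbT T j ∩ inactivePegs s).Nonempty) :
    (Subgroup.closure (T : Set (Equiv.Perm (Word k))) :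
      Set (Equiv.Perm (Word k))).Infinite :=
  infinite_subgroup_of_condStar_failure_general T hT j hj horb

end Hanoi
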